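/- arXiv:2409.05652 — 2 statements merged into one kernel-verified Lean document; each statement's English description precedes it below -/
import Mathlib

section
/- Let n ≥ 2 be an integer, k ≥ 1 an integer, γ > 1, and ε > 0. If V ∈ C²((0,1)) ∩ C((0,1]) satisfies L_k V = 0 on (0,1) and V(r) → 0 as r → 0+, then |V(r)| ≤ r^{α_k} |V(1)| for all r ∈ (0,1]. -/
open Set Filter

noncomputable section

/-- The ODE operator `L_k`:
`(L_k h)(r) = h'' + ((n-2)/r + 2r/(ε+r²)) h' - (k(k+n-3)/r² + 2/(γ(ε+r²))) h`. -/
def Lk (n k : ℕ) (γ ε : ℝ) (h : ℝ → ℝ) (r : ℝ) : ℝ :=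
  deriv (deriv h) r + (((n:ℝ) - 2)/r + 2*r/(ε + r^2)) * deriv h r
    - ((k:ℝ)*((k:ℝ) + (n:ℝ) - 3)/r^2 + 2/(γ*(ε + r^2))) * h r

/-- `α_k := (-(n-1) + √((n-1)² + 4(k(k+n-3) + 2/γ)))/2`. -/
def alphaK (n k : ℕ) (γ : ℝ) : ℝ :=
  (-((n:ℝ) - 1) + Real.sqrt (((n:ℝ)-1)^2 + 4*((k:ℝ)*((k:ℝ)+(n:ℝ)-3) + 2/γ)))/2

/-!
`φ(r) = r^α M` with `M ≥ 0` is a supersolution, `L_k φ ≤ 0`: since `α` is the positive root of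
`α² + (n-1)α = k(k+n-3) + 2/γ`, one finds `L_k φ = (2α - 2/γ)(r²/(ε+r²) - 1) r^(α-2) M`, and
`α ≥ 1/γ` when `γ > 1`. If `V - φ` were positive somewhere on `(0,1]`, it would attain a positive
interior maximum (it vanishes at `0+` and is `≤ 0` at `1` once `M ≥ V(1)`). There `(V - φ)' = 0`,
`(V - φ)'' ≤ 0` and the zeroth-order coefficient of `L_k` is negative, so `L_k (V - φ) < 0`,
whereas `L_k (V - φ) = -L_k φ ≥ 0`. Applying this to `±V` with `M = |V(1)|` gives the bound.
-/

open Topology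

lemma IsLocalMax.deriv_deriv_nonpos {f : ℝ → ℝ} {x : ℝ} (hmax : IsLocalMax f x)
    (hf : ∀ᶠ y in 𝓝 x, DifferentiableAt ℝ f y) : deriv (deriv f) x ≤ 0 := by
  by_contra! h
  have hderiv_pos : ∀ᶠ y in 𝓝[>] x, 0 < deriv f y :=
    deriv_pos_right_of_sign_deriv <| nhdsWithin_le_nhds <|
      eventually_nhdsWithin_sign_eq_of_deriv_pos h hmax.deriv_eq_zero
  obtain ⟨b, hxb, hsub⟩ := mem_nhdsGT_iff_exists_Ioc_subset.1
    (hderiv_pos.and (nhdsWithin_le_nhds (hf.and hmax)))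
  have hmono : StrictMonoOn f (Icc x b) := by
    refine strictMonoOn_of_deriv_pos (convex_Icc x b) (fun y hy => ?_) (fun y hy => ?_)
    · rcases hy.1.eq_or_lt with rfl | hxy
      · exact hf.self_of_nhds.continuousAt.continuousWithinAt
      · exact (hsub ⟨hxy, hy.2⟩).2.1.continuousAt.continuousWithinAt
    · rw [interior_Icc] at hy
      exact (hsub (Ioo_subset_Ioc_self hy)).1
  have hfb : f x < f b := hmono (left_mem_Icc.2 hxb.le) (right_mem_Icc.2 hxb.le) hxb
  exact hfb.not_ge (hsub (right_mem_Ioc.2 hxb)).2.2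

lemma ContinuousOn.exists_isLocalMax_pos {U : ℝ → ℝ} {a b r₀ : ℝ} (hU : ContinuousOn U (Ioc a b))
    (hUa : Tendsto U (𝓝[>] a) (𝓝 0)) (hUb : U b ≤ 0) (hr₀ : r₀ ∈ Ioc a b) (hpos : 0 < U r₀) :
    ∃ x ∈ Ioo a b, IsLocalMax U x ∧ 0 < U x := by
  obtain ⟨δ, hδ, hδr₀⟩ := ((hUa.eventually (eventually_lt_nhds hpos)).and
    (Ioo_mem_nhdsGT hr₀.1)).exists
  obtain ⟨x, hx, hxmax⟩ := isCompact_Icc.exists_isMaxOn (nonempty_Icc.2 (hδr₀.2.le.trans hr₀.2))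
    (hU.mono fun y hy => ⟨hδr₀.1.trans_le hy.1, hy.2⟩)
  have hr₀x : U r₀ ≤ U x := hxmax ⟨hδr₀.2.le, hr₀.2⟩
  have hδx : δ < x := hx.1.lt_of_ne fun h => by subst h; linarith
  have hxb : x < b := hx.2.lt_of_ne fun h => by subst h; linarith
  exact ⟨x, ⟨hδr₀.1.trans hδx, hxb⟩, hxmax.isLocalMax (Icc_mem_nhds hδx hxb), hpos.trans_le hr₀x⟩

section Lk

variable {n k : ℕ} {γ ε : ℝ}

lemma alphaK_sq_add_mul (hn : 2 ≤ n) (hk : 1 ≤ k) (hγ : 0 < γ) :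
    alphaK n k γ ^ 2 + ((n:ℝ) - 1) * alphaK n k γ = (k:ℝ) * ((k:ℝ) + (n:ℝ) - 3) + 2 / γ := by
  have hn' : (2:ℝ) ≤ n := by exact_mod_cast hn
  have hk' : (1:ℝ) ≤ k := by exact_mod_cast hk
  have hD : 0 ≤ ((n:ℝ) - 1)^2 + 4 * ((k:ℝ) * ((k:ℝ) + (n:ℝ) - 3) + 2 / γ) := by
    have : 0 < 2 / γ := by positivity
    nlinarith
  have hs := Real.sq_sqrt hD
  unfold alphaK
  linear_combination hs / 4

lemma inv_le_alphaK (hn : 2 ≤ n) (hk : 1 ≤ k) (hγ : 1 < γ) : γ⁻¹ ≤ alphaK n k γ := by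
  have hn' : (2:ℝ) ≤ n := by exact_mod_cast hn
  have hk' : (1:ℝ) ≤ k := by exact_mod_cast hk
  have ht : 0 < γ⁻¹ := by positivity
  have ht1 : γ⁻¹ < 1 := inv_lt_one_of_one_lt₀ hγ
  have hsqrt : 2 * γ⁻¹ + ((n:ℝ) - 1)
      ≤ Real.sqrt (((n:ℝ) - 1)^2 + 4 * ((k:ℝ) * ((k:ℝ) + (n:ℝ) - 3) + 2 / γ)) := by
    refine Real.le_sqrt_of_sq_le ?_
    rw [div_eq_mul_inv]
    nlinarith [mul_nonneg (sub_nonneg.2 ht1.le) (by linarith : (0:ℝ) ≤ γ⁻¹ + n - 2),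
      mul_nonneg (sub_nonneg.2 hk') (by linarith : (0:ℝ) ≤ k + n - 2)]
  unfold alphaK
  linarith

lemma Lk_neg (V : ℝ → ℝ) (r : ℝ) : Lk n k γ ε (-V) r = -Lk n k γ ε V r := by
  simp only [Lk, deriv.neg', deriv.fun_neg, Pi.neg_apply]
  ring

lemma Lk_sub {V W : ℝ → ℝ} {r : ℝ} (hV : ContDiffAt ℝ 2 V r) (hW : ContDiffAt ℝ 2 W r) :
    Lk n k γ ε (V - W) r = Lk n k γ ε V r - Lk n k γ ε W r := by
  have hderiv : deriv (V - W) =ᶠ[𝓝 r] deriv V - deriv W := by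
    filter_upwards [hV.eventually (by simp), hW.eventually (by simp)] with y hVy hWy
    exact deriv_sub (hVy.differentiableAt two_ne_zero) (hWy.differentiableAt two_ne_zero)
  have hV' : DifferentiableAt ℝ (deriv V) r :=
    (hV.derivWithin (m := 1) (by norm_num)).differentiableAt one_ne_zero
  have hW' : DifferentiableAt ℝ (deriv W) r :=
    (hW.derivWithin (m := 1) (by norm_num)).differentiableAt one_ne_zero
  simp only [Lk, hderiv.deriv_eq, hderiv.self_of_nhds, deriv_sub hV' hW', Pi.sub_apply]
  ring

lemma Lk_lt_zero_of_isLocalMax (hn : 2 ≤ n) (hk : 1 ≤ k) (hγ : 0 < γ) (hε : 0 < ε) {U : ℝ → ℝ}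
    {x : ℝ} (hU : ∀ᶠ y in 𝓝 x, DifferentiableAt ℝ U y) (hmax : IsLocalMax U x) (hpos : 0 < U x) :
    Lk n k γ ε U x < 0 := by
  have hn' : (2:ℝ) ≤ n := by exact_mod_cast hn
  have hk' : (1:ℝ) ≤ k := by exact_mod_cast hk
  have hcoeff : 0 < (k:ℝ) * ((k:ℝ) + (n:ℝ) - 3) / x^2 + 2 / (γ * (ε + x^2)) :=
    add_pos_of_nonneg_of_pos (div_nonneg (by nlinarith) (sq_nonneg x)) (by positivity)
  have hsecond := hmax.deriv_deriv_nonpos hU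
  unfold Lk
  rw [hmax.deriv_eq_zero]
  nlinarith

lemma Lk_rpow_alphaK_mul_nonpos (hn : 2 ≤ n) (hk : 1 ≤ k) (hγ : 1 < γ) (hε : 0 < ε) {M r : ℝ}
    (hM : 0 ≤ M) (hr : 0 < r) : Lk n k γ ε (fun y => y ^ alphaK n k γ * M) r ≤ 0 := by
  set α := alphaK n k γ
  have hφ' : ∀ y, 0 < y → HasDerivAt (fun y => y ^ α * M) (α * y ^ (α - 1) * M) y := fun y hy =>
    (Real.hasDerivAt_rpow_const (Or.inl hy.ne')).mul_const M
  have hφ'' : HasDerivAt (fun y => α * y ^ (α - 1) * M) (α * ((α - 1) * r ^ (α - 1 - 1)) * M) r :=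
    ((Real.hasDerivAt_rpow_const (Or.inl hr.ne')).const_mul α).mul_const M
  have hderiv : deriv (fun y => y ^ α * M) =ᶠ[𝓝 r] fun y => α * y ^ (α - 1) * M := by
    filter_upwards [lt_mem_nhds hr] with y hy
    exact (hφ' y hy).deriv
  have hr1 : r ^ (α - 1) = r ^ (α - 2) * r := by
    rw [← Real.rpow_add_one hr.ne']; ring_nf
  have hr0 : r ^ α = r ^ (α - 2) * r ^ 2 := by
    rw [← Real.rpow_natCast, ← Real.rpow_add hr]; norm_num
  have hchar := alphaK_sq_add_mul hn hk (zero_lt_one.trans hγ)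
  have hden : 0 < ε + r ^ 2 := by positivity
  have hL : Lk n k γ ε (fun y => y ^ α * M) r
      = M * r ^ (α - 2) * ((2 * α - 2 / γ) * (r ^ 2 / (ε + r ^ 2) - 1)) := by
    simp only [Lk, hderiv.deriv_eq, hφ''.deriv, (hφ' r hr).deriv]
    rw [show α - 1 - 1 = α - 2 by ring, hr1, hr0,
      show (k:ℝ) * ((k:ℝ) + (n:ℝ) - 3) = α ^ 2 + ((n:ℝ) - 1) * α - 2 / γ by linarith]
    field_simp
    ring
  have hα : 2 / γ ≤ 2 * α := by
    rw [div_eq_mul_inv]; linarith [inv_le_alphaK hn hk hγ]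
  rw [hL]
  refine mul_nonpos_of_nonneg_of_nonpos (by positivity) (mul_nonpos_of_nonneg_of_nonpos
    (by linarith) ?_)
  rw [sub_nonpos, div_le_one hden]
  linarith

theorem le_rpow_alphaK_mul_of_Lk_eq_zero (hn : 2 ≤ n) (hk : 1 ≤ k) (hγ : 1 < γ) (hε : 0 < ε)
    {V : ℝ → ℝ} (hV2 : ∀ r ∈ Ioo (0:ℝ) 1, ContDiffAt ℝ 2 V r)
    (hVc : ContinuousOn V (Ioc (0:ℝ) 1)) (hODE : ∀ r ∈ Ioo (0:ℝ) 1, Lk n k γ ε V r = 0)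
    (hV0 : Tendsto V (𝓝[>] 0) (𝓝 0)) {M : ℝ} (hM : 0 ≤ M) (hV1 : V 1 ≤ M) :
    ∀ r ∈ Ioc (0:ℝ) 1, V r ≤ r ^ alphaK n k γ * M := by
  set α := alphaK n k γ
  set φ : ℝ → ℝ := fun y => y ^ α * M
  have hα : 0 < α := (inv_pos.2 (zero_lt_one.trans hγ)).trans_le (inv_le_alphaK hn hk hγ)
  have hφ : ∀ y, 0 < y → ContDiffAt ℝ 2 φ y := fun y hy =>
    (Real.contDiffAt_rpow_const_of_ne hy.ne').mul contDiffAt_const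
  have hφ0 : Tendsto φ (𝓝[>] 0) (𝓝 0) := by
    have := ((Real.continuousAt_rpow_const 0 α (Or.inr hα.le)).tendsto.mul_const M).mono_left
      (nhdsWithin_le_nhds (s := Ioi 0))
    rwa [Real.zero_rpow hα.ne', zero_mul] at this
  intro r hr
  by_contra! hr_gt
  obtain ⟨x, hx, hmax, hpos⟩ := ContinuousOn.exists_isLocalMax_pos (U := V - φ)
    (hVc.sub fun y hy => (hφ y hy.1).continuousAt.continuousWithinAt)
    (by have := hV0.sub hφ0; rwa [sub_zero] at this) (by simpa [φ] using hV1) hr (sub_pos.2 hr_gt)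
  have hsub : ContDiffAt ℝ 2 (V - φ) x := (hV2 x hx).sub (hφ x hx.1)
  have hneg := Lk_lt_zero_of_isLocalMax (ε := ε) hn hk (zero_lt_one.trans hγ) hε
    ((hsub.eventually (by simp)).mono fun y hy => hy.differentiableAt two_ne_zero) hmax hpos
  rw [Lk_sub (hV2 x hx) (hφ x hx.1), hODE x hx] at hneg
  linarith [Lk_rpow_alphaK_mul_nonpos (ε := ε) hn hk hγ hε hM hx.1]

end Lk

/-- Decay estimate for spherical-harmonic modes, case `γ > 1`. -/
theorem mode_decay_large_gamma (n k : ℕ) (hn : 2 ≤ n) (hk : 1 ≤ k) (γ ε : ℝ)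
    (hγ : 1 < γ) (hε : 0 < ε) (V : ℝ → ℝ)
    (hV2 : ∀ r ∈ Ioo (0:ℝ) 1, ContDiffAt ℝ 2 V r)
    (hVc : ContinuousOn V (Ioc (0:ℝ) 1))
    (hODE : ∀ r ∈ Ioo (0:ℝ) 1, Lk n k γ ε V r = 0)
    (hV0 : Tendsto V (nhdsWithin 0 (Ioi 0)) (nhds 0)) :
    ∀ r ∈ Ioc (0:ℝ) 1, |V r| ≤ r ^ alphaK n k γ * |V 1| := by
  intro r hr
  have hupper := le_rpow_alphaK_mul_of_Lk_eq_zero hn hk hγ hε hV2 hVc hODE hV0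
    (abs_nonneg (V 1)) (le_abs_self _) r hr
  have hlower := le_rpow_alphaK_mul_of_Lk_eq_zero hn hk hγ hε (V := -V)
    (fun y hy => (hV2 y hy).neg) hVc.neg (fun y hy => by rw [Lk_neg, hODE y hy, neg_zero])
    (by have := hV0.neg; rwa [neg_zero] at this) (abs_nonneg (V 1)) (neg_le_abs _) r hr
  exact abs_le.2 ⟨by simp only [Pi.neg_apply] at hlower; linarith, hupper⟩
end
end

section
/- Suppose u ∈ C(closure Ω̃) is harmonic in Ω̃, is C¹ on Ω̃ ∪ ∂D1 ∪ ∂D2, satisfies u + γ ∂_ν u = 0 on ∂D1 ∪ ∂D2, satisfies ∫_{∂D_j} ∂_ν u dH^{n−1} = 0 for j = 1, 2 (H^{n−1} the (n−1)-dimensional Hausdorff measure), satisfies u(x) = x_1 on ∂Ω, and is odd in x_1 (i.e. u changes sign when the sign of the first coordinate is flipped). Then u(x) ≥ x_1 for all x ∈ Ω̃ with x_1 ≥ 0, and u(x) ≤ x_1 for all x ∈ Ω̃ with x_1 ≤ 0. -/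
/-
With `v := u - x₁`, harmonic on the half-domain `U := Ω̃ ∩ {x₁ > 0}`, it suffices to show `v ≥ 0`
on `U`. By the weak minimum principle (perturb `v` by `-σ|x|²`, whose Laplacian is negative, so that
an interior minimum is impossible) `v` attains its minimum over `closure U` at a point `z` of
`frontier U`. There `v(z) = 0` if `z₁ = 0` (oddness) or `z ∈ ∂Ω` (boundary data). If `z` lies on a
hole `∂D_j`, the outward ray `z + t (z - c_j)` enters `U`, so minimality gives
`∂_{z - c_j} u(z) ≥ z₁`, and the Robin condition turns this into `u(z) = γ ∂_{z - c_j} u(z) ≥ z₁`.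
The case `x₁ ≤ 0` follows by oddness.
-/

open MeasureTheory Metric Set
open scoped RealInnerProductSpace ENNReal

noncomputable section

abbrev E (k : ℕ) := EuclideanSpace ℝ (Fin k)

/-- Laplacian: sum of pure second directional derivatives. -/
def elap {k : ℕ} (u : E k → ℝ) (x : E k) : ℝ :=
  ∑ i : Fin k, iteratedFDeriv ℝ 2 u x ![EuclideanSpace.single i 1, EuclideanSpace.single i 1]

/-- Assemble the point `(p, t)`. -/
def eglue {m : ℕ} (p : E m) (t : ℝ) : E (m+1) :=
  (EuclideanSpace.equiv (Fin (m+1)) ℝ).symm fun i => Fin.lastCases t (fun j => p j) i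

/-- Flip the sign of the first coordinate. -/
def flipFirst {m : ℕ} (x : E (m+1)) : E (m+1) :=
  (EuclideanSpace.equiv (Fin (m+1)) ℝ).symm fun i => if i = 0 then -(x i) else x i

open Filter Topology Laplacian

theorem IsLocalMin.deriv_deriv_nonneg {g : ℝ → ℝ} {a : ℝ} (h : IsLocalMin g a)
    (hg : ContinuousAt g a) : 0 ≤ deriv (deriv g) a := by
  by_contra! hneg
  have hmax := isLocalMax_of_deriv_deriv_neg hneg h.deriv_eq_zero hg
  have hconst : g =ᶠ[𝓝 a] fun _ => g a := by
    filter_upwards [h, hmax] with t h₁ h₂ using le_antisymm h₂ h₁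
  rw [hconst.deriv.deriv_eq] at hneg
  simp at hneg

section NormedSpace

variable {F : Type*} [NormedAddCommGroup F] [NormedSpace ℝ F] {f : F → ℝ} {x : F}

theorem ContDiffAt.deriv_deriv_comp_add_smul (hf : ContDiffAt ℝ 2 f x) (e : F) :
    deriv (deriv fun t : ℝ => f (x + t • e)) 0 = iteratedFDeriv ℝ 2 f x ![e, e] := by
  have hline : ∀ t : ℝ, HasDerivAt (fun s : ℝ => x + s • e) e t := fun t => by
    simpa using ((hasDerivAt_id t).smul_const e).const_add x
  have hderiv : (deriv fun t : ℝ => f (x + t • e)) =ᶠ[𝓝 0] fun t => fderiv ℝ f (x + t • e) e := by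
    have hcont : ContinuousAt (fun t : ℝ => x + t • e) 0 := (hline 0).continuousAt
    have := hcont.eventually (by simpa using hf.eventually (by simp))
    filter_upwards [this] with t ht
    exact ((ht.differentiableAt (by simp)).hasFDerivAt.comp_hasDerivAt t (hline t)).deriv
  have hf' : DifferentiableAt ℝ (fderiv ℝ f) x :=
    (hf.fderiv_right (m := 1) (by norm_num)).differentiableAt (by simp)
  have hderiv' : HasDerivAt (fun t : ℝ => fderiv ℝ f (x + t • e) e)
      (fderiv ℝ (fderiv ℝ f) x e e) 0 := by
    simpa [Function.comp_def] using ((ContinuousLinearMap.apply ℝ ℝ e).hasFDerivAt.comp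
      (x + (0 : ℝ) • e) (by simpa using hf'.hasFDerivAt)).comp_hasDerivAt (0 : ℝ) (hline 0)
  rw [hderiv.deriv_eq, hderiv'.deriv, iteratedFDeriv_two_apply]
  simp

theorem IsLocalMin.iteratedFDeriv_two_nonneg (h : IsLocalMin f x) (hf : ContDiffAt ℝ 2 f x)
    (e : F) : 0 ≤ iteratedFDeriv ℝ 2 f x ![e, e] := by
  have hline : Continuous fun t : ℝ => x + t • e := by fun_prop
  rw [← hf.deriv_deriv_comp_add_smul]
  refine IsLocalMin.deriv_deriv_nonneg ?_ ?_
  · exact IsLocalMin.comp_continuous (by simpa using h) hline.continuousAt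
  · exact ContinuousAt.comp (by simpa using hf.continuousAt) hline.continuousAt

end NormedSpace

section InnerProductSpace

variable {F : Type*} [NormedAddCommGroup F] [InnerProductSpace ℝ F]

theorem iteratedFDeriv_two_norm_sq_apply (x e : F) :
    iteratedFDeriv ℝ 2 (fun y : F => ‖y‖ ^ 2) x ![e, e] = 2 * ‖e‖ ^ 2 := by
  have hexp : (fun t : ℝ => ‖x + t • e‖ ^ 2) =
      fun t => ‖x‖ ^ 2 + 2 * ⟪x, e⟫ * t + ‖e‖ ^ 2 * t ^ 2 := by
    ext t
    rw [norm_add_sq_real, real_inner_smul_right, norm_smul, mul_pow, Real.norm_eq_abs, sq_abs]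
    ring
  have hd : deriv (fun t : ℝ => ‖x + t • e‖ ^ 2) = fun t => 2 * ⟪x, e⟫ + ‖e‖ ^ 2 * (2 * t) := by
    ext t
    rw [hexp]
    exact (((hasDerivAt_id t).const_mul _).const_add _ |>.add
      ((hasDerivAt_pow 2 t).const_mul _)).deriv.trans (by simp)
  rw [← (contDiff_norm_sq ℝ).contDiffAt.deriv_deriv_comp_add_smul, hd, deriv_const_add',
    deriv_const_mul_field', deriv_const_mul_id', mul_comm]

variable [FiniteDimensional ℝ F]

theorem laplacian_norm_sq (x : F) : Δ (fun y : F => ‖y‖ ^ 2) x = 2 * Module.finrank ℝ F := by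
  simp [InnerProductSpace.laplacian_eq_iteratedFDeriv_stdOrthonormalBasis,
    iteratedFDeriv_two_norm_sq_apply, mul_comm]

theorem IsLocalMin.laplacian_nonneg {f : F → ℝ} {x : F} (h : IsLocalMin f x)
    (hf : ContDiffAt ℝ 2 f x) : 0 ≤ Δ f x := by
  rw [InnerProductSpace.laplacian_eq_iteratedFDeriv_stdOrthonormalBasis]
  exact Finset.sum_nonneg fun i _ => h.iteratedFDeriv_two_nonneg hf _

theorem ContinuousLinearMap.laplacian_eq_zero (ℓ : F →L[ℝ] ℝ) : Δ ⇑ℓ = 0 := by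
  have : fderiv ℝ ⇑ℓ = fun _ => ℓ := funext fun _ => ℓ.fderiv
  ext x
  simp [InnerProductSpace.laplacian_eq_iteratedFDeriv_stdOrthonormalBasis,
    iteratedFDeriv_two_apply, this]

end InnerProductSpace

section MinimumPrinciple

variable {F : Type*} [NormedAddCommGroup F] [InnerProductSpace ℝ F] [FiniteDimensional ℝ F]
  [Nontrivial F] {U : Set F} {v : F → ℝ}

theorem le_of_forall_frontier_le_of_laplacian_eq_zero (hU : IsOpen U)
    (hb : Bornology.IsBounded U) (hc : ContinuousOn v (closure U)) (hd : ContDiffOn ℝ 2 v U)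
    (hΔ : ∀ x ∈ U, Δ v x = 0) {a : ℝ} (hfr : ∀ z ∈ frontier U, a ≤ v z) :
    ∀ x ∈ closure U, a ≤ v x := by
  by_contra! ⟨x₀, hx₀, hlt⟩
  obtain ⟨R, hR⟩ := (hb.closure.subset_closedBall 0)
  set σ := (a - v x₀) / (R ^ 2 + 1)
  have hσ : 0 < σ := div_pos (by linarith) (by positivity)
  have hσR : σ * R ^ 2 < a - v x₀ := by
    rw [div_mul_eq_mul_div, div_lt_iff₀ (by positivity)]
    nlinarith
  set w : F → ℝ := v - σ • fun y => ‖y‖ ^ 2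
  obtain ⟨y, hy, hmin⟩ := hb.isCompact_closure.exists_isMinOn ⟨x₀, hx₀⟩
    (hc.sub (by fun_prop) : ContinuousOn w (closure U))
  have hnorm : ∀ x ∈ closure U, ‖x‖ ^ 2 ≤ R ^ 2 := fun x hx => by
    have := mem_closedBall_zero_iff.1 (hR hx)
    gcongr
  have hyU : y ∈ U := by
    by_contra hyU
    have hfy := hfr y ⟨hy, by rwa [hU.interior_eq]⟩
    have hwy : v y - σ * ‖y‖ ^ 2 ≤ v x₀ - σ * ‖x₀‖ ^ 2 := hmin hx₀
    nlinarith [mul_le_mul_of_nonneg_left (hnorm y hy) hσ.le, sq_nonneg ‖x₀‖]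
  have hvy : ContDiffAt ℝ 2 v y := hd.contDiffAt (hU.mem_nhds hyU)
  have hq : ContDiffAt ℝ 2 (fun y : F => ‖y‖ ^ 2) y := (contDiff_norm_sq ℝ).contDiffAt
  have hσq : ContDiffAt ℝ 2 (σ • fun y : F => ‖y‖ ^ 2) y := hq.const_smul σ
  have hΔw : Δ w y = -(σ * (2 * Module.finrank ℝ F)) := by
    rw [hvy.laplacian_sub hσq, InnerProductSpace.laplacian_smul σ hq, hΔ y hyU, laplacian_norm_sq]
    simp
  have hΔw_nonneg := (hmin.isLocalMin (mem_of_superset (hU.mem_nhds hyU) subset_closure)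
    ).laplacian_nonneg (hvy.sub hσq)
  have hdim : (0 : ℝ) < Module.finrank ℝ F := by exact_mod_cast Module.finrank_pos
  rw [hΔw] at hΔw_nonneg
  nlinarith

theorem exists_mem_frontier_isMinOn_of_laplacian_eq_zero (hU : IsOpen U) (hne : U.Nonempty)
    (hb : Bornology.IsBounded U) (hc : ContinuousOn v (closure U)) (hd : ContDiffOn ℝ 2 v U)
    (hΔ : ∀ x ∈ U, Δ v x = 0) : ∃ z ∈ frontier U, IsMinOn v (closure U) z := by
  have hfr : (frontier U).Nonempty :=
    nonempty_frontier_iff.2 ⟨hne, fun h => NormedSpace.unbounded_univ ℝ F (h ▸ hb)⟩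
  obtain ⟨z, hz, hmin⟩ := (hb.isCompact_closure.of_isClosed_subset isClosed_frontier
    frontier_subset_closure).exists_isMinOn hfr (hc.mono frontier_subset_closure)
  exact ⟨z, hz, le_of_forall_frontier_le_of_laplacian_eq_zero hU hb hc hd hΔ hmin⟩

end MinimumPrinciple

def perforatedBall {F : Type*} [PseudoMetricSpace F] [Zero F] (R : ℝ) (c₁ c₂ : F) : Set F :=
  ball 0 R \ (closedBall c₁ 1 ∪ closedBall c₂ 1)

section PerforatedBall

variable {F : Type*} {R : ℝ}

section PseudoMetricSpace

variable [PseudoMetricSpace F] [Zero F] {c₁ c₂ z : F}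

theorem perforatedBall_comm (R : ℝ) (c₁ c₂ : F) :
    perforatedBall R c₁ c₂ = perforatedBall R c₂ c₁ := by
  rw [perforatedBall, perforatedBall, union_comm]

theorem isOpen_perforatedBall : IsOpen (perforatedBall R c₁ c₂) :=
  isOpen_ball.sdiff (isClosed_closedBall.union isClosed_closedBall)

theorem closure_perforatedBall_subset :
    closure (perforatedBall R c₁ c₂) ⊆ closedBall 0 R \ (ball c₁ 1 ∪ ball c₂ 1) :=
  closure_minimal (sdiff_subset_sdiff ball_subset_closedBall
    (union_subset_union ball_subset_closedBall ball_subset_closedBall))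
    (isClosed_closedBall.sdiff (isOpen_ball.union isOpen_ball))

theorem mem_sphere_of_mem_closure_perforatedBall (hz : z ∈ closure (perforatedBall R c₁ c₂))
    (hz' : z ∉ perforatedBall R c₁ c₂) :
    z ∈ sphere 0 R ∨ z ∈ ball 0 R ∩ sphere c₁ 1 ∨ z ∈ ball 0 R ∩ sphere c₂ 1 := by
  obtain ⟨hzR, hz₁₂⟩ := closure_perforatedBall_subset hz
  rcases (mem_closedBall.1 hzR).eq_or_lt with hR | hR
  · exact Or.inl hR
  have hzR : z ∈ ball 0 R := hR
  have hz' : z ∈ closedBall c₁ 1 ∪ closedBall c₂ 1 := by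
    by_contra h
    exact hz' ⟨hzR, h⟩
  simp only [mem_union, mem_ball, not_or, not_lt] at hz₁₂
  rcases hz' with h | h
  · exact Or.inr (Or.inl ⟨hzR, le_antisymm h hz₁₂.1⟩)
  · exact Or.inr (Or.inr ⟨hzR, le_antisymm h hz₁₂.2⟩)

end PseudoMetricSpace

theorem eventually_add_smul_sub_mem_perforatedBall [NormedAddCommGroup F] [NormedSpace ℝ F]
    {c₁ c₂ z : F} (hc : 2 < dist c₁ c₂) (hzR : z ∈ ball 0 R)
    (hz : z ∈ sphere c₁ 1) : ∀ᶠ t in 𝓝[>] (0 : ℝ), z + t • (z - c₁) ∈ perforatedBall R c₁ c₂ := by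
  have hz₂ : z ∈ ball 0 R ∩ (closedBall c₂ 1)ᶜ := by
    refine ⟨hzR, fun hz₂ => ?_⟩
    have := dist_triangle_left c₁ c₂ z
    rw [mem_sphere.1 hz] at this
    linarith [mem_closedBall.1 hz₂]
  have hopen : ∀ᶠ t in 𝓝 (0 : ℝ), z + t • (z - c₁) ∈ ball 0 R ∩ (closedBall c₂ 1)ᶜ :=
    (show Continuous fun t : ℝ => z + t • (z - c₁) by fun_prop).continuousAt.eventually_mem
      ((isOpen_ball.inter isClosed_closedBall.isOpen_compl).mem_nhds (by simpa using hz₂))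
  filter_upwards [eventually_nhdsWithin_of_eventually_nhds hopen, self_mem_nhdsWithin]
    with t ht ht₀
  refine ⟨ht.1, not_or.2 ⟨fun ht₁ => ?_, ht.2⟩⟩
  have hdist : dist (z + t • (z - c₁)) c₁ = 1 + t := by
    rw [dist_eq_norm, add_sub_right_comm, show z - c₁ + t • (z - c₁) = (1 + t) • (z - c₁) by
      rw [add_smul, one_smul], norm_smul, ← dist_eq_norm,
      mem_sphere.1 hz, Real.norm_of_nonneg (by linarith [mem_Ioi.1 ht₀]), mul_one]
  linarith [mem_closedBall.1 ht₁, mem_Ioi.1 ht₀]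

end PerforatedBall

section Comparison

variable {F : Type*} [NormedAddCommGroup F] [InnerProductSpace ℝ F] {γ : ℝ}
  {ℓ : F →L[ℝ] ℝ} {u : F → ℝ}

theorem le_of_isMinOn_sub_of_robin [CompleteSpace F] (hγ : 1 ≤ γ) {s : Set F} {z c : F}
    (hc : ℓ c = 0) (hz : 0 ≤ ℓ z) (hmin : IsMinOn (u - ⇑ℓ) s z) (hu : DifferentiableAt ℝ u z)
    (hpath : ∃ᶠ t in 𝓝[>] (0 : ℝ), z + t • (z - c) ∈ s)
    (hrobin : u z + γ * ⟪c - z, gradient u z⟫ = 0) : ℓ z ≤ u z := by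
  have hder : 0 ≤ fderiv ℝ u z (z - c) - ℓ z := by
    simpa [hc] using hmin.localize.hasFDerivWithinAt_nonneg
      (hu.hasFDerivAt.sub ℓ.hasFDerivAt).hasFDerivWithinAt
      (mem_posTangentConeAt_of_frequently_mem hpath)
  have hnormal : ⟪c - z, gradient u z⟫ = -fderiv ℝ u z (z - c) := by
    rw [← neg_sub, inner_neg_left, inner_gradient_right]
    rfl
  rw [hnormal] at hrobin
  nlinarith

theorem le_of_isMinOn_of_mem_sphere [CompleteSpace F] (hγ : 1 ≤ γ) {R : ℝ} {c c' z : F}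
    (hcc' : 2 < dist c c') (hc : ℓ c = 0) (hz : z ∈ ball 0 R ∩ sphere c 1) (hz₀ : 0 < ℓ z)
    (hmin : IsMinOn (u - ⇑ℓ) (closure (perforatedBall R c c' ∩ {y | 0 < ℓ y})) z)
    (hu : DifferentiableAt ℝ u z) (hrobin : u z + γ * ⟪c - z, gradient u z⟫ = 0) :
    ℓ z ≤ u z := by
  refine le_of_isMinOn_sub_of_robin hγ hc hz₀.le hmin hu (Eventually.frequently ?_) hrobin
  filter_upwards [eventually_add_smul_sub_mem_perforatedBall hcc' hz.1 hz.2, self_mem_nhdsWithin]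
    with t ht (ht₀ : 0 < t)
  refine subset_closure ⟨ht, ?_⟩
  show 0 < ℓ (z + t • (z - c))
  rw [map_add, map_smul, map_sub, hc, sub_zero, smul_eq_mul]
  positivity

theorem le_of_robin_of_laplacian_eq_zero [FiniteDimensional ℝ F] (hγ : 1 ≤ γ) {R : ℝ}
    {c₁ c₂ : F} (hc : 2 < dist c₁ c₂) (hc₁ : ℓ c₁ = 0) (hc₂ : ℓ c₂ = 0)
    (hcont : ContinuousOn u (closure (perforatedBall R c₁ c₂)))
    (hC2 : ContDiffOn ℝ 2 u (perforatedBall R c₁ c₂))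
    (hΔ : ∀ x ∈ perforatedBall R c₁ c₂, Δ u x = 0)
    (hdiff : ∀ x ∈ sphere c₁ 1 ∪ sphere c₂ 1, DifferentiableAt ℝ u x)
    (hrobin₁ : ∀ x ∈ sphere c₁ 1, u x + γ * ⟪c₁ - x, gradient u x⟫ = 0)
    (hrobin₂ : ∀ x ∈ sphere c₂ 1, u x + γ * ⟪c₂ - x, gradient u x⟫ = 0)
    (hout : ∀ x ∈ sphere 0 R, u x = ℓ x)
    (hzero : ∀ x ∈ closure (perforatedBall R c₁ c₂), ℓ x = 0 → u x = 0)
    {x : F} (hx : x ∈ perforatedBall R c₁ c₂) (hx₀ : 0 ≤ ℓ x) : ℓ x ≤ u x := by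
  rcases hx₀.eq_or_lt with hx₀ | hx₀
  · rw [← hx₀, hzero x (subset_closure hx) hx₀.symm]
  set U := perforatedBall R c₁ c₂ ∩ {y | 0 < ℓ y} with hU_def
  have hU : IsOpen U := isOpen_perforatedBall.inter (isOpen_lt continuous_const ℓ.continuous)
  have hUΩ : closure U ⊆ closure (perforatedBall R c₁ c₂) := closure_mono inter_subset_left
  have : Nontrivial F := ⟨⟨x, 0, fun h => by simp [h] at hx₀⟩⟩
  obtain ⟨z, hzU, hmin⟩ := exists_mem_frontier_isMinOn_of_laplacian_eq_zero hU ⟨x, hx, hx₀⟩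
    (isBounded_ball.subset fun y hy => hy.1.1) ((hcont.mono hUΩ).sub ℓ.continuous.continuousOn)
    ((hC2.mono inter_subset_left).sub ℓ.contDiff.contDiffOn) fun y hy => by
      rw [(hC2.contDiffAt (isOpen_perforatedBall.mem_nhds hy.1)).laplacian_sub
        ℓ.contDiff.contDiffAt, hΔ y hy.1, ℓ.laplacian_eq_zero, Pi.zero_apply, sub_zero]
  suffices ℓ z ≤ u z by
    have : u z - ℓ z ≤ u x - ℓ x := hmin (subset_closure ⟨hx, hx₀⟩)
    linarith
  have hzcl : z ∈ closure U := frontier_subset_closure hzU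
  have hzℓ : 0 ≤ ℓ z := closure_minimal (fun y hy => le_of_lt (α := ℝ) hy.2)
    (isClosed_le continuous_const ℓ.continuous) hzcl
  rcases hzℓ.eq_or_lt with hz₀ | hz₀
  · rw [← hz₀, hzero z (hUΩ hzcl) hz₀.symm]
  have hzΩ : z ∉ perforatedBall R c₁ c₂ := fun h => (hU.frontier_eq ▸ hzU).2 ⟨h, hz₀⟩
  rcases mem_sphere_of_mem_closure_perforatedBall (hUΩ hzcl) hzΩ with hz | hz | hz
  · exact (hout z hz).ge
  · exact le_of_isMinOn_of_mem_sphere hγ hc hc₁ hz hz₀ hmin (hdiff z (.inl hz.2))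
      (hrobin₁ z hz.2)
  · rw [hU_def, perforatedBall_comm] at hmin
    exact le_of_isMinOn_of_mem_sphere hγ (dist_comm c₁ c₂ ▸ hc) hc₂ hz hz₀ hmin
      (hdiff z (.inr hz.2)) (hrobin₂ z hz.2)

end Comparison

theorem elap_eq_laplacian {k : ℕ} (u : E k → ℝ) (x : E k) : elap u x = Δ u x := by
  rw [InnerProductSpace.laplacian_eq_iteratedFDeriv_orthonormalBasis u
    (EuclideanSpace.basisFun (Fin k) ℝ)]
  simp [elap, EuclideanSpace.basisFun_apply]

theorem eglue_zero_apply {m : ℕ} (t : ℝ) (i : Fin (m + 1)) :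
    eglue (0 : E m) t i = if i = Fin.last m then t else 0 := by
  induction i using Fin.lastCases with
  | last => simp [eglue]
  | cast j => simp [eglue, (Fin.castSucc_lt_last j).ne]

theorem eglue_zero_apply_zero {m : ℕ} (hm : 1 ≤ m) (t : ℝ) : eglue (0 : E m) t 0 = 0 := by
  rw [eglue_zero_apply, if_neg (Fin.ext_iff.not.2 (by rw [Fin.val_zero, Fin.val_last]; omega))]

theorem dist_eglue_zero {m : ℕ} (s t : ℝ) :
    dist (eglue (0 : E m) s) (eglue (0 : E m) t) = |s - t| := by
  rw [EuclideanSpace.dist_eq, Finset.sum_eq_single (Fin.last m)]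
  · simp [eglue_zero_apply, Real.dist_eq, Real.sqrt_sq_eq_abs]
  · intro i _ hi
    simp [eglue_zero_apply, hi]
  · simp

section FlipFirst

variable {m : ℕ} {x : E (m + 1)}

@[simp]
theorem flipFirst_apply_zero (x : E (m + 1)) : flipFirst x 0 = -x 0 := by
  simp [flipFirst]

theorem flipFirst_eq_self (hx : x 0 = 0) : flipFirst x = x := by
  ext i
  by_cases hi : i = 0 <;> simp [flipFirst, hi, hx]

theorem dist_flipFirst (x y : E (m + 1)) : dist (flipFirst x) (flipFirst y) = dist x y := by
  simp only [EuclideanSpace.dist_eq]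
  congr 1
  refine Finset.sum_congr rfl fun i _ => ?_
  by_cases hi : i = 0 <;> simp [flipFirst, hi, dist_neg_neg]

theorem flipFirst_mem_perforatedBall {R : ℝ} {c₁ c₂ : E (m + 1)} (hc₁ : c₁ 0 = 0)
    (hc₂ : c₂ 0 = 0) (hx : x ∈ perforatedBall R c₁ c₂) : flipFirst x ∈ perforatedBall R c₁ c₂ := by
  have hdist : ∀ c : E (m + 1), c 0 = 0 → dist (flipFirst x) c = dist x c := fun c hc => by
    rw [← dist_flipFirst x c, flipFirst_eq_self hc]
  simpa only [perforatedBall, Set.mem_sdiff, mem_ball, mem_union, mem_closedBall,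
    hdist 0 (by simp), hdist c₁ hc₁, hdist c₂ hc₂] using hx

end FlipFirst

/-- Step 3 of the proof of Theorem 1.7: comparison with the linear function `x₁`. -/
theorem comparison_with_linear (m : ℕ) (hm : 1 ≤ m) (γ ε : ℝ)
    (hγ : 1 < γ) (hε : ε ∈ Set.Ioo (0:ℝ) (1/4)) :
    ∀ u : E (m+1) → ℝ,
    (fun c1 c2 Omt =>
      ContinuousOn u (closure Omt) ∧
      ContDiffOn ℝ 2 u Omt ∧
      (∀ x ∈ Omt, elap u x = 0) ∧
      (∀ x ∈ Omt ∪ sphere c1 1 ∪ sphere c2 1, DifferentiableAt ℝ u x) ∧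
      ContinuousOn (fun x => gradient u x) (Omt ∪ sphere c1 1 ∪ sphere c2 1) ∧
      -- homogeneous Robin condition with inner normal `ν(x) = c_j - x`
      (∀ x ∈ sphere c1 1, u x + γ * ⟪c1 - x, gradient u x⟫ = 0) ∧
      (∀ x ∈ sphere c2 1, u x + γ * ⟪c2 - x, gradient u x⟫ = 0) ∧
      -- zero flux
      (∫ x in sphere c1 1, ⟪c1 - x, gradient u x⟫ ∂(μH[(m:ℝ)]) = 0) ∧
      (∫ x in sphere c2 1, ⟪c2 - x, gradient u x⟫ ∂(μH[(m:ℝ)]) = 0) ∧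
      -- boundary data `u(x) = x₁` on `∂Ω`
      (∀ x ∈ sphere (0 : E (m+1)) 5, u x = x 0) ∧
      -- `u` is odd in `x₁`
      (∀ x ∈ closure Omt, u (flipFirst x) = - u x))
      (eglue (0 : E m) (1 + ε/2))
      (eglue (0 : E m) (-1 - ε/2))
      (ball (0 : E (m+1)) 5 \
        (closedBall (eglue (0 : E m) (1 + ε/2)) 1 ∪
         closedBall (eglue (0 : E m) (-1 - ε/2)) 1)) →
    ∀ x ∈ ball (0 : E (m+1)) 5 \
        (closedBall (eglue (0 : E m) (1 + ε/2)) 1 ∪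
         closedBall (eglue (0 : E m) (-1 - ε/2)) 1),
      (0 ≤ x 0 → x 0 ≤ u x) ∧ (x 0 ≤ 0 → u x ≤ x 0) := by
  obtain ⟨hε, -⟩ := hε
  rintro u ⟨hcont, hC2, hΔ, hdiff, -, hrobin₁, hrobin₂, -, -, hout, hodd⟩
  set c₁ := eglue (0 : E m) (1 + ε / 2)
  set c₂ := eglue (0 : E m) (-1 - ε / 2)
  have hc₁ : c₁ 0 = 0 := eglue_zero_apply_zero hm _
  have hc₂ : c₂ 0 = 0 := eglue_zero_apply_zero hm _
  have hc : 2 < dist c₁ c₂ := by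
    rw [dist_eglue_zero, abs_of_pos (by linarith)]
    linarith
  have hzero : ∀ x ∈ closure (perforatedBall 5 c₁ c₂), x 0 = 0 → u x = 0 := fun x hx hx₀ => by
    linarith [flipFirst_eq_self hx₀ ▸ hodd x hx]
  have key : ∀ x ∈ perforatedBall 5 c₁ c₂, 0 ≤ x 0 → x 0 ≤ u x := fun x =>
    le_of_robin_of_laplacian_eq_zero (ℓ := EuclideanSpace.proj 0) hγ.le hc hc₁ hc₂ hcont hC2
      (fun y hy => elap_eq_laplacian u y ▸ hΔ y hy)
      (fun y hy => hdiff y (hy.elim (fun h => .inl (.inr h)) .inr)) hrobin₁ hrobin₂ hout hzero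
  intro x hx
  refine ⟨key x hx, fun hx₀ => ?_⟩
  have := key (flipFirst x) (flipFirst_mem_perforatedBall hc₁ hc₂ hx) (by simpa using hx₀)
  rw [flipFirst_apply_zero, hodd x (subset_closure hx)] at this
  linarith
end
end
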